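/- Let B be skew-symmetrizable and A a quasi-Cartan companion of B. If A' = μ_k^ε(A) is a quasi-Cartan companion of μ_k(B), then μ_k^{-ε}(A') = A. -/

import Mathlib

open Matrix

/-- Positive part `[x]_+ = max(x,0)`. -/
def intPos (x : ℤ) : ℤ := max x 0

/-- Matrix mutation `μ_k(B)`. -/
def mutB {n : ℕ} (B : Matrix (Fin n) (Fin n) ℤ) (k : Fin n) : Matrix (Fin n) (Fin n) ℤ :=
  Matrix.of fun i j =>
    if i = k ∨ j = k then -B i j
    else B i j + intPos (B i k) * intPos (B k j) - intPos (-B i k) * intPos (-B k j)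

/-- `B` is skew-symmetrizable: `DB` is skew-symmetric for some positive diagonal `D`. -/
def SkewSymmetrizable {n : ℕ} (B : Matrix (Fin n) (Fin n) ℤ) : Prop :=
  ∃ d : Fin n → ℚ, (∀ i, 0 < d i) ∧
    (Matrix.diagonal d * B.map (Int.cast : ℤ → ℚ))ᵀ =
      -(Matrix.diagonal d * B.map (Int.cast : ℤ → ℚ))

/-- `A` is symmetrizable: `DA` is symmetric for some positive diagonal `D`. -/
def Symmetrizable {n : ℕ} (A : Matrix (Fin n) (Fin n) ℤ) : Prop :=
  ∃ d : Fin n → ℚ, (∀ i, 0 < d i) ∧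
    (Matrix.diagonal d * A.map (Int.cast : ℤ → ℚ)).IsSymm

/-- `A` is a quasi-Cartan companion of `B`. -/
def QCCompanion {n : ℕ} (B A : Matrix (Fin n) (Fin n) ℤ) : Prop :=
  Symmetrizable A ∧ (∀ i, A i i = 2) ∧ ∀ i j, i ≠ j → |A i j| = |B i j|

/-- The `ε`-mutation `μ_k^ε(A)` of a quasi-Cartan companion `A` of `B`. -/
def cmut {n : ℕ} (B A : Matrix (Fin n) (Fin n) ℤ) (k : Fin n) (ε : ℤ) :
    Matrix (Fin n) (Fin n) ℤ :=
  Matrix.of fun i j =>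
    if i = k ∧ j = k then A k k
    else if j = k then ε * Int.sign (B k i) * A i k
    else if i = k then ε * Int.sign (B k j) * A k j
    else A i j - Int.sign (A i k * A k j) * intPos (B i k * B k j)

/-- A directed cycle in the diagram `Γ(B)` (arrow `i → j` iff `B j i > 0`). -/
def DirectedCycle {n : ℕ} (B : Matrix (Fin n) (Fin n) ℤ) (m : ℕ)
    (v : Fin (m + 1) → Fin n) : Prop :=
  Function.Injective v ∧ ∀ i, 0 < B (v (i + 1)) (v i)

/-- `Γ(B)` is acyclic: it contains no directed cycle. -/
def Acyclic {n : ℕ} (B : Matrix (Fin n) (Fin n) ℤ) : Prop :=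
  ¬ ∃ (m : ℕ) (v : Fin (m + 1) → Fin n), DirectedCycle B m v

/-- Mutation equivalence of matrices. -/
def MutEquiv {n : ℕ} : Matrix (Fin n) (Fin n) ℤ → Matrix (Fin n) (Fin n) ℤ → Prop :=
  Relation.ReflTransGen fun X Y => ∃ k, Y = mutB X k

/-- A (chordless, induced) cycle of length `m+3` in the diagram `Γ(B)`, given by
the cyclically labeled vertices `v 0, v 1, …`. -/
def IsCycle {n : ℕ} (B : Matrix (Fin n) (Fin n) ℤ) (m : ℕ)
    (v : Fin (m + 3) → Fin n) : Prop :=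
  Function.Injective v ∧ (∀ i, B (v i) (v (i + 1)) ≠ 0) ∧
    ∀ i j : Fin (m + 3), j ≠ i → j ≠ i + 1 → i ≠ j + 1 → B (v i) (v j) = 0

/-- An oriented cycle of `Γ(B)`: a cycle all of whose edges point cyclically. -/
def IsOrientedCycle {n : ℕ} (B : Matrix (Fin n) (Fin n) ℤ) (m : ℕ)
    (v : Fin (m + 3) → Fin n) : Prop :=
  IsCycle B m v ∧
    ((∀ i, 0 < B (v (i + 1)) (v i)) ∨ (∀ i, 0 < B (v i) (v (i + 1))))

/-- Number of edges `{v i, v (i+1)}` of the cycle with `A`-entry positive. -/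
def posEdgeCount {n : ℕ} (A : Matrix (Fin n) (Fin n) ℤ) (m : ℕ)
    (v : Fin (m + 3) → Fin n) : ℕ :=
  (Finset.univ.filter fun i : Fin (m + 3) => 0 < A (v i) (v (i + 1))).card

/-- Admissibility of a quasi-Cartan companion `A` of `B`. -/
def Admissible {n : ℕ} (B A : Matrix (Fin n) (Fin n) ℤ) : Prop :=
  (∀ m v, IsOrientedCycle B m v → Odd (posEdgeCount A m v)) ∧
  (∀ m v, IsCycle B m v → ¬ IsOrientedCycle B m v → Even (posEdgeCount A m v))

/-- Sign of a sign-coherent vector: `+1` if all entries are nonnegative, `-1` otherwise. -/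
def vsgn {n : ℕ} (v : Fin n → ℤ) : ℤ := if ∀ j, 0 ≤ v j then 1 else -1

/-- Y-seed mutation at `k` of a pair `(c, B)` of a tuple of c-vectors and an
exchange matrix. -/
def seedMut {n : ℕ} (k : Fin n)
    (s : (Fin n → Fin n → ℤ) × Matrix (Fin n) (Fin n) ℤ) :
    (Fin n → Fin n → ℤ) × Matrix (Fin n) (Fin n) ℤ :=
  (fun i => if i = k then -(s.1 k)
    else fun j => s.1 i j + intPos (vsgn (s.1 k) * s.2 k i) * s.1 k j,
   mutB s.2 k)

/-- Reachability by a sequence of Y-seed mutations. -/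
def SeedMutEquiv {n : ℕ} :
    (Fin n → Fin n → ℤ) × Matrix (Fin n) (Fin n) ℤ →
    (Fin n → Fin n → ℤ) × Matrix (Fin n) (Fin n) ℤ → Prop :=
  Relation.ReflTransGen fun s s' => ∃ k, s' = seedMut k s

/-- The tuple of standard basis vectors. -/
def stdBasis {n : ℕ} : Fin n → Fin n → ℤ := fun i j => if i = j then 1 else 0

/-- The generalized Cartan matrix associated to `B₀`. -/
def cartan {n : ℕ} (B0 : Matrix (Fin n) (Fin n) ℤ) : Matrix (Fin n) (Fin n) ℤ :=
  Matrix.of fun i j => if i = j then 2 else -|B0 i j|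


/-!
Mutating twice at `k` with opposite signs multiplies the `k`-th row and column of `A` by
`ε sgn(B_kj) · (-ε) sgn(-B_kj) = sgn(B_kj)²`, which is `1` wherever `A_kj ≠ 0`. Away from
the `k`-th row and column, `μ_k` leaves the products `B_ik B_kj` unchanged, while
skew-symmetrizability (`sgn B_ki = -sgn B_ik`) gives `A'_ik A'_kj = -A_ik A_kj` whenever
`B_ik B_kj > 0`; so the second correction term cancels the first.
-/

lemma Int.sign_mul_self_mul {a b : ℤ} (h : b = 0 → a = 0) : b.sign * b.sign * a = a := by
  rcases eq_or_ne b 0 with rfl | hb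
  · simp [h rfl]
  · rw [← Int.sign_mul, Int.sign_eq_one_of_pos (mul_self_pos.mpr hb), one_mul]

section

variable {n : ℕ}

lemma SkewSymmetrizable.sign_apply_swap {B : Matrix (Fin n) (Fin n) ℤ}
    (hB : SkewSymmetrizable B) (i j : Fin n) : (B j i).sign = -(B i j).sign := by
  obtain ⟨d, hd, hskew⟩ := hB
  have h : d j * B j i = -(d i * B i j) := by
    simpa [Matrix.diagonal_mul] using congrFun (congrFun hskew i) j
  have hcast (x : ℤ) : SignType.sign (x : ℚ) = SignType.sign x := by simp [sign_apply]
  apply_fun SignType.sign at h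
  rw [Left.sign_neg, sign_mul, sign_mul, sign_pos (hd i), sign_pos (hd j), one_mul, one_mul,
    hcast, hcast] at h
  rw [Int.sign_eq_sign, Int.sign_eq_sign, h, SignType.coe_neg]

lemma SkewSymmetrizable.apply_eq_zero_of_swap {B : Matrix (Fin n) (Fin n) ℤ}
    (hB : SkewSymmetrizable B) {i j : Fin n} (h : B i j = 0) : B j i = 0 := by
  simpa [h] using hB.sign_apply_swap i j

lemma QCCompanion.apply_eq_zero {B A : Matrix (Fin n) (Fin n) ℤ} (hA : QCCompanion B A)
    {i j : Fin n} (hij : i ≠ j) (h : B i j = 0) : A i j = 0 := by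
  simpa [h] using hA.2.2 i j hij

lemma mutB_apply_row (B : Matrix (Fin n) (Fin n) ℤ) (k j : Fin n) : mutB B k k j = -B k j := by
  simp [mutB]

lemma mutB_apply_col (B : Matrix (Fin n) (Fin n) ℤ) (k i : Fin n) : mutB B k i k = -B i k := by
  simp [mutB]

variable (B A : Matrix (Fin n) (Fin n) ℤ) {i j k : Fin n} (ε : ℤ)

lemma cmut_apply_self : cmut B A k ε k k = A k k := by
  simp [cmut]

lemma cmut_apply_row (hj : j ≠ k) : cmut B A k ε k j = ε * (B k j).sign * A k j := by
  simp [cmut, hj]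

lemma cmut_apply_col (hi : i ≠ k) : cmut B A k ε i k = ε * (B k i).sign * A i k := by
  simp [cmut, hi]

lemma cmut_apply_of_ne (hi : i ≠ k) (hj : j ≠ k) :
    cmut B A k ε i j = A i j - (A i k * A k j).sign * intPos (B i k * B k j) := by
  simp [cmut, hi, hj]

variable {B A ε}

lemma cmut_neg_cmut_apply_row (hε : ε * ε = 1) (hA : B k j = 0 → A k j = 0) (hj : j ≠ k) :
    cmut (mutB B k) (cmut B A k ε) k (-ε) k j = A k j := by
  rw [cmut_apply_row _ _ _ hj, mutB_apply_row, cmut_apply_row _ _ _ hj, Int.sign_neg]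
  linear_combination ((B k j).sign * (B k j).sign * A k j) * hε +
    Int.sign_mul_self_mul hA

lemma cmut_neg_cmut_apply_col (hε : ε * ε = 1) (hA : B k i = 0 → A i k = 0) (hi : i ≠ k) :
    cmut (mutB B k) (cmut B A k ε) k (-ε) i k = A i k := by
  rw [cmut_apply_col _ _ _ hi, mutB_apply_row, cmut_apply_col _ _ _ hi, Int.sign_neg]
  linear_combination ((B k i).sign * (B k i).sign * A i k) * hε +
    Int.sign_mul_self_mul hA

lemma cmut_neg_cmut_apply_of_ne (hε : ε * ε = 1) (hB : (B k i).sign = -(B i k).sign)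
    (hi : i ≠ k) (hj : j ≠ k) :
    cmut (mutB B k) (cmut B A k ε) k (-ε) i j = A i j := by
  rw [cmut_apply_of_ne _ _ _ hi hj, mutB_apply_col, mutB_apply_row, neg_mul_neg,
    cmut_apply_col _ _ _ hi, cmut_apply_row _ _ _ hj, cmut_apply_of_ne _ _ _ hi hj]
  rcases le_or_gt (B i k * B k j) 0 with hle | hpos
  · rw [intPos, max_eq_right hle]
    ring
  · have hsign : (B i k).sign * (B k j).sign = 1 := by
      rw [← Int.sign_mul, Int.sign_eq_one_of_pos hpos]
    have hflip : ε * (B k i).sign * A i k * (ε * (B k j).sign * A k j) = -(A i k * A k j) := by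
      rw [hB]
      linear_combination (-((B i k).sign * (B k j).sign * (A i k * A k j))) * hε -
        (A i k * A k j) * hsign
    rw [hflip, Int.sign_neg]
    ring

end

theorem cmut_involutive_general {n : ℕ} (B A : Matrix (Fin n) (Fin n) ℤ)
    (hB : SkewSymmetrizable B) (hA : QCCompanion B A) (k : Fin n)
    (ε : ℤ) (hε : ε = 1 ∨ ε = -1) :
    cmut (mutB B k) (cmut B A k ε) k (-ε) = A := by
  have hεε : ε * ε = 1 := by rcases hε with rfl | rfl <;> norm_num
  ext i j
  rcases eq_or_ne i k with rfl | hi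
  · rcases eq_or_ne j i with rfl | hj
    · rw [cmut_apply_self, cmut_apply_self]
    · exact cmut_neg_cmut_apply_row hεε (hA.apply_eq_zero hj.symm) hj
  · rcases eq_or_ne j k with rfl | hj
    · exact cmut_neg_cmut_apply_col hεε (hA.apply_eq_zero hi ∘ hB.apply_eq_zero_of_swap) hi
    · exact cmut_neg_cmut_apply_of_ne hεε (hB.sign_apply_swap i k) hi hj

/-- if `μ_k^ε(A)` is a quasi-Cartan companion of `μ_k(B)`, then
`μ_k^{-ε}(μ_k^ε(A)) = A`. -/
theorem cmut_involutive {n : ℕ} (B A : Matrix (Fin n) (Fin n) ℤ)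
    (hB : SkewSymmetrizable B) (hA : QCCompanion B A) (k : Fin n)
    (ε : ℤ) (hε : ε = 1 ∨ ε = -1)
    (h' : QCCompanion (mutB B k) (cmut B A k ε)) :
    cmut (mutB B k) (cmut B A k ε) k (-ε) = A :=
  cmut_involutive_general B A hB hA k ε hε
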